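/- arXiv:1812.10939 — 2 statements merged into one kernel-verified Lean document; each statement's English description precedes it below -/
import Mathlib

section
/- Under the strong-mixing framework, let s ≤ t be natural numbers, let h : X → ℝ be bounded measurable, and let (φ_u)_{u=s}^{t−1} be arbitrary probability measures on X. Define T_{s|s} := h and T_{s|u+1}(y) := ∫ T_{s|u}(x) B_{φ_u}(y, dx) for s ≤ u ≤ t−1. Then osc(T_{s|t}) ≤ ρ^{t−s} · osc(h). -/
open MeasureTheory

/-- Oscillation of a real-valued function: `osc f = sup_{x,x'} |f x − f x'|`. -/
noncomputable def osc {X : Type*} (f : X → ℝ) : ℝ := ⨆ p : X × X, |f p.1 - f p.2|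

/-- The backward statistics `T_{s|s+k}` defined by `T_{s|s} = h` and
`T_{s|u+1}(y) = ∫ T_{s|u}(x) B_{φ_u}(y, dx)
            = (∫ T_{s|u}(x) q(x,y) φ_u(dx)) / (∫ q(x,y) φ_u(dx))`,
indexed here by `k = u − s`. -/
noncomputable def Tseq {X : Type*} [MeasurableSpace X]
    (q : X → X → ℝ) (φ : ℕ → Measure X) (s : ℕ) (h : X → ℝ) : ℕ → X → ℝ
  | 0 => h
  | k + 1 => fun y =>
      (∫ x, Tseq q φ s h k x * q x y ∂(φ (s + k))) / ∫ x, q x y ∂(φ (s + k))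

section Key

variable {X : Type*} [MeasurableSpace X]
  (q : X → X → ℝ) (hq : Measurable (Function.uncurry q))
  (εlo εhi : ℝ) (hεlo : 0 < εlo) (hεhi : εlo < εhi)
  (hqb : ∀ x x', q x x' ∈ Set.Icc εlo εhi)
  (μ : Measure X) [IsProbabilityMeasure μ]
  (f : X → ℝ) (hf : Measurable f) (C : ℝ) (hfC : ∀ x, |f x| ≤ C)

omit [MeasurableSpace X] in
lemma osc_bddAbove' : True := trivial

end Key

lemma nonempty_of_prob {X : Type*} [MeasurableSpace X] (μ : Measure X)
    [IsProbabilityMeasure μ] : Nonempty X := by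
  by_contra hne
  rw [not_nonempty_iff] at hne
  have h1 : μ Set.univ = 1 := measure_univ
  rw [Set.univ_eq_empty_iff.mpr hne, measure_empty] at h1
  exact one_ne_zero h1.symm

section Key

variable {X : Type*} [MeasurableSpace X]
  (q : X → X → ℝ) (hq : Measurable (Function.uncurry q))
  (εlo εhi : ℝ) (hεlo : 0 < εlo) (hεhi : εlo < εhi)
  (hqb : ∀ x x', q x x' ∈ Set.Icc εlo εhi)
  (μ : Measure X) [IsProbabilityMeasure μ]
  (f : X → ℝ) (hf : Measurable f) (C : ℝ) (hfC : ∀ x, |f x| ≤ C)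

include hq in
lemma meas_q_left (y : X) : Measurable fun x => q x y :=
  hq.comp (measurable_id.prodMk measurable_const)

include hq hεlo hεhi hqb in
lemma int_q (y : X) : Integrable (fun x => q x y) μ := by
  refine Integrable.mono' (integrable_const εhi) (meas_q_left q hq y).aestronglyMeasurable
    (Filter.Eventually.of_forall fun x => ?_)
  rw [Real.norm_eq_abs, abs_of_nonneg (le_trans hεlo.le (hqb x y).1)]
  exact (hqb x y).2

include hq hεlo hεhi hqb in
lemma Z_bounds (y : X) : εlo ≤ (∫ x, q x y ∂μ) ∧ (∫ x, q x y ∂μ) ≤ εhi := by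
  constructor
  · calc εlo = ∫ _x, εlo ∂μ := by simp
    _ ≤ ∫ x, q x y ∂μ := integral_mono (integrable_const _) (int_q q hq εlo εhi hεlo hεhi hqb μ y)
        fun x => (hqb x y).1
  · calc (∫ x, q x y ∂μ) ≤ ∫ _x, εhi ∂μ :=
        integral_mono (int_q q hq εlo εhi hεlo hεhi hqb μ y) (integrable_const _)
          fun x => (hqb x y).2
    _ = εhi := by simp

include hq hεlo hεhi hqb hf hfC in
lemma int_fq (y : X) : Integrable (fun x => f x * q x y) μ := by
  refine Integrable.mono' (integrable_const (C * εhi)) (hf.mul (meas_q_left q hq y)).aestronglyMeasurable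
    (Filter.Eventually.of_forall fun x => ?_)
  rw [Real.norm_eq_abs, abs_mul, abs_of_nonneg (le_trans hεlo.le (hqb x y).1)]
  exact mul_le_mul (hfC x) (hqb x y).2 (le_trans hεlo.le (hqb x y).1)
    (le_trans (abs_nonneg _) (hfC x))

include hfC in
lemma osc_bddAbove : BddAbove (Set.range fun p : X × X => |f p.1 - f p.2|) := by
  refine ⟨2 * C, ?_⟩
  rintro _ ⟨p, rfl⟩
  calc |f p.1 - f p.2| ≤ |f p.1| + |f p.2| := abs_sub _ _
    _ ≤ 2 * C := by have := hfC p.1; have := hfC p.2; linarith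

include hfC in
lemma le_osc (x x' : X) : |f x - f x'| ≤ osc f :=
  le_ciSup (osc_bddAbove f C hfC) (x, x')

include hfC in
lemma osc_nonneg [Nonempty X] : 0 ≤ osc f := by
  obtain ⟨x⟩ := (inferInstance : Nonempty X)
  exact le_trans (abs_nonneg _) (le_osc f C hfC x x)

-- the key pointwise contraction bound
include hq hεlo hεhi hqb hf hfC in
lemma key_contraction (y y' : X) :
    |(∫ x, f x * q x y ∂μ) / (∫ x, q x y ∂μ)
      - (∫ x, f x * q x y' ∂μ) / (∫ x, q x y' ∂μ)| ≤ (1 - εlo / εhi) * osc f := by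
  have hX : Nonempty X := nonempty_of_prob μ
  have hεhi0 : (0:ℝ) < εhi := hεlo.trans hεhi
  set Zy := ∫ x, q x y ∂μ with hZydef
  set Zy' := ∫ x, q x y' ∂μ with hZy'def
  obtain ⟨hZy1, hZy2⟩ := Z_bounds q hq εlo εhi hεlo hεhi hqb μ y
  obtain ⟨hZy'1, hZy'2⟩ := Z_bounds q hq εlo εhi hεlo hεhi hqb μ y'
  have hZy0 : 0 < Zy := hεlo.trans_le hZy1
  have hZy'0 : 0 < Zy' := hεlo.trans_le hZy'1
  set g : X → ℝ := fun x => q x y / Zy with hgdef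
  set g' : X → ℝ := fun x => q x y' / Zy' with hg'def
  have hintg : Integrable g μ := (int_q q hq εlo εhi hεlo hεhi hqb μ y).div_const _
  have hintg' : Integrable g' μ := (int_q q hq εlo εhi hεlo hεhi hqb μ y').div_const _
  have hg1 : ∫ x, g x ∂μ = 1 := by
    rw [hgdef]; rw [integral_div]; exact div_self hZy0.ne'
  have hg'1 : ∫ x, g' x ∂μ = 1 := by
    rw [hg'def]; rw [integral_div]; exact div_self hZy'0.ne'
  -- bounds on g
  have hglb : ∀ x, εlo / εhi ≤ g x := by
    intro x
    rw [hgdef, div_le_div_iff₀ hεhi0 hZy0]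
    nlinarith [(hqb x y).1]
  have hg'lb : ∀ x, εlo / εhi ≤ g' x := by
    intro x
    rw [hg'def, div_le_div_iff₀ hεhi0 hZy'0]
    nlinarith [(hqb x y').1]
  -- constants
  set M := ⨆ x, f x with hMdef
  set m := ⨅ x, f x with hmdef
  have hbddA : BddAbove (Set.range f) := by
    refine ⟨C, ?_⟩; rintro _ ⟨x, rfl⟩; exact le_trans (le_abs_self _) (hfC x)
  have hbddB : BddBelow (Set.range f) := by
    refine ⟨-C, ?_⟩; rintro _ ⟨x, rfl⟩
    have := (abs_le.mp (hfC x)).1; linarith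
  have hfM : ∀ x, f x ≤ M := fun x => le_ciSup hbddA x
  have hmf : ∀ x, m ≤ f x := fun x => ciInf_le hbddB x
  have hMm : M - m ≤ osc f := by
    have : M ≤ osc f + m := by
      refine ciSup_le fun x => ?_
      have : f x - osc f ≤ m := by
        refine le_ciInf fun x' => ?_
        have := (abs_le.mp (le_osc f C hfC x x')).1
        have := (abs_le.mp (le_osc f C hfC x x')).2
        linarith
      linarith
    linarith
  set c := (M + m) / 2 with hcdef
  have hfc : ∀ x, |f x - c| ≤ osc f / 2 := by
    intro x
    rw [abs_le]
    constructor
    · have := hmf x; have := hMm; linarith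
    · have := hfM x; have := hMm; linarith
  -- the main identity
  have hintfg : ∀ z : X, ∫ x, f x * (q x z / (∫ x, q x z ∂μ)) ∂μ
      = (∫ x, f x * q x z ∂μ) / (∫ x, q x z ∂μ) := by
    intro z
    simp only [← mul_div_assoc]
    exact integral_div _ _
  have hintfgI : ∀ z : X, Integrable (fun x => f x * (q x z / (∫ x, q x z ∂μ))) μ := by
    intro z
    have : (fun x => f x * (q x z / (∫ x, q x z ∂μ)))
        = fun x => (f x * q x z) / (∫ x, q x z ∂μ) := by
      funext x; ring
    rw [this]
    exact (int_fq q hq εlo εhi hεlo hεhi hqb μ f hf C hfC z).div_const _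
  have hintfgy : Integrable (fun x => f x * g x) μ := hintfgI y
  have hintfgy' : Integrable (fun x => f x * g' x) μ := hintfgI y'
  have I1 : Integrable (fun x => f x * g x - f x * g' x) μ := hintfgy.sub hintfgy'
  have Icg : Integrable (fun x => c * g x) μ := hintg.const_mul c
  have Icg' : Integrable (fun x => c * g' x) μ := hintg'.const_mul c
  have I2 : Integrable (fun x => c * g x - c * g' x) μ := Icg.sub Icg'
  have key_eq : Zy⁻¹ * (∫ x, f x * q x y ∂μ) - Zy'⁻¹ * (∫ x, f x * q x y' ∂μ)
      = ∫ x, (f x - c) * (g x - g' x) ∂μ := by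
    have expand : (fun x => (f x - c) * (g x - g' x))
        = fun x => (f x * g x - f x * g' x) - (c * g x - c * g' x) := by
      funext x; ring
    rw [expand, integral_sub I1 I2,
      integral_sub hintfgy hintfgy', integral_sub Icg Icg',
      integral_const_mul, integral_const_mul, hg1, hg'1]
    have e1 : ∫ x, f x * g x ∂μ = (∫ x, f x * q x y ∂μ) / Zy := hintfg y
    have e2 : ∫ x, f x * g' x ∂μ = (∫ x, f x * q x y' ∂μ) / Zy' := hintfg y'
    rw [e1, e2]
    field_simp
    ring
  have goal_eq : (∫ x, f x * q x y ∂μ) / Zy - (∫ x, f x * q x y' ∂μ) / Zy'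
      = ∫ x, (f x - c) * (g x - g' x) ∂μ := by
    rw [← key_eq]; field_simp
  rw [goal_eq]
  -- now bound the integral
  set α := εlo / εhi with hαdef
  have hα0 : 0 ≤ α := div_nonneg hεlo.le hεhi0.le
  have hintdiff : Integrable (fun x => (f x - c) * (g x - g' x)) μ := by
    have expand : (fun x => (f x - c) * (g x - g' x))
        = fun x => (f x * g x - f x * g' x) - (c * g x - c * g' x) := by
      funext x; ring
    rw [expand]
    exact (hintfgy.sub hintfgy').sub ((hintg.const_mul c).sub (hintg'.const_mul c))
  have hosc0 : 0 ≤ osc f := osc_nonneg f C hfC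
  have hintrhs : Integrable (fun x => osc f / 2 * ((g x - α) + (g' x - α))) μ :=
    (((hintg.sub (integrable_const α)).add (hintg'.sub (integrable_const α))).const_mul _)
  have Iga : Integrable (fun x => g x - α) μ := hintg.sub (integrable_const α)
  have Ig'a : Integrable (fun x => g' x - α) μ := hintg'.sub (integrable_const α)
  have Isum : Integrable (fun x => (g x - α) + (g' x - α)) μ := Iga.add Ig'a
  calc |∫ x, (f x - c) * (g x - g' x) ∂μ|
      ≤ ∫ x, |(f x - c) * (g x - g' x)| ∂μ := by
        rw [← Real.norm_eq_abs]
        refine le_trans (norm_integral_le_integral_norm _) (le_of_eq ?_)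
        simp [Real.norm_eq_abs, abs_mul]
    _ ≤ ∫ x, osc f / 2 * ((g x - α) + (g' x - α)) ∂μ := by
        refine integral_mono hintdiff.abs hintrhs fun x => ?_
        rw [abs_mul]
        refine mul_le_mul (hfc x) ?_ (abs_nonneg _) (by linarith)
        have h1 := hglb x
        have h2 := hg'lb x
        rw [abs_le]
        constructor <;> [linarith; linarith]
    _ = osc f / 2 * ((1 - α) + (1 - α)) := by
        rw [integral_const_mul, integral_add Iga Ig'a, integral_sub hintg (integrable_const α),
          integral_sub hintg' (integrable_const α), hg1, hg'1]
        simp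
    _ = (1 - εlo / εhi) * osc f := by rw [hαdef]; ring

end Key

section Key2

variable {X : Type*} [MeasurableSpace X]
  (q : X → X → ℝ) (hq : Measurable (Function.uncurry q))
  (εlo εhi : ℝ) (hεlo : 0 < εlo) (hεhi : εlo < εhi)
  (hqb : ∀ x x', q x x' ∈ Set.Icc εlo εhi)
  (μ : Measure X) [IsProbabilityMeasure μ]
  (f : X → ℝ) (hf : Measurable f) (C : ℝ) (hfC : ∀ x, |f x| ≤ C)

include hq hεlo hεhi hqb hf hfC in
lemma key_bound (y : X) :
    |(∫ x, f x * q x y ∂μ) / (∫ x, q x y ∂μ)| ≤ C := by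
  obtain ⟨hZ1, _⟩ := Z_bounds q hq εlo εhi hεlo hεhi hqb μ y
  have hZ0 : 0 < ∫ x, q x y ∂μ := hεlo.trans_le hZ1
  have hX : Nonempty X := nonempty_of_prob μ
  obtain ⟨x0⟩ := hX
  have hC0 : 0 ≤ C := le_trans (abs_nonneg _) (hfC x0)
  rw [abs_div, abs_of_pos hZ0, div_le_iff₀ hZ0]
  calc |∫ x, f x * q x y ∂μ| ≤ ∫ x, |f x * q x y| ∂μ := by
        rw [← Real.norm_eq_abs]
        refine le_trans (norm_integral_le_integral_norm _) (le_of_eq ?_)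
        simp [Real.norm_eq_abs, abs_mul]
    _ ≤ ∫ x, C * q x y ∂μ := by
        refine integral_mono (int_fq q hq εlo εhi hεlo hεhi hqb μ f hf C hfC y).abs
          ((int_q q hq εlo εhi hεlo hεhi hqb μ y).const_mul C) fun x => ?_
        rw [abs_mul, abs_of_nonneg (le_trans hεlo.le (hqb x y).1)]
        exact mul_le_mul_of_nonneg_right (hfC x) (le_trans hεlo.le (hqb x y).1)
    _ = C * ∫ x, q x y ∂μ := integral_const_mul _ _

include hq hf in
lemma key_meas : Measurable fun y => (∫ x, f x * q x y ∂μ) / (∫ x, q x y ∂μ) := by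
  have h1 : Measurable fun y => ∫ x, f x * q x y ∂μ := by
    have : StronglyMeasurable (Function.uncurry fun x y => f x * q x y) :=
      ((hf.comp measurable_fst).mul hq).stronglyMeasurable
    exact this.integral_prod_left.measurable
  have h2 : Measurable fun y => ∫ x, q x y ∂μ := by
    exact hq.stronglyMeasurable.integral_prod_left.measurable
  exact h1.div h2

end Key2

/-- under the strong mixing assumption `0 < ε̲ ≤ q ≤ ε̄`, with
`ρ = 1 − ε̲/ε̄`, the backward statistics contract oscillations:
`osc(T_{s|t}) ≤ ρ^{t−s} osc(h)` for arbitrary probability measures `φ_u`. -/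
theorem stmt8 {X : Type*} [MeasurableSpace X]
    (q : X → X → ℝ) (hq : Measurable (Function.uncurry q))
    (εlo εhi : ℝ) (hεlo : 0 < εlo) (hεhi : εlo < εhi)
    (hqb : ∀ x x', q x x' ∈ Set.Icc εlo εhi)
    (ρ : ℝ) (hρ : ρ = 1 - εlo / εhi)
    (φ : ℕ → Measure X) (hφ : ∀ u, IsProbabilityMeasure (φ u))
    (s t : ℕ) (hst : s ≤ t)
    (h : X → ℝ) (hh : Measurable h) (C : ℝ) (hhb : ∀ x, |h x| ≤ C) :
    osc (Tseq q φ s h (t - s)) ≤ ρ ^ (t - s) * osc h := by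
  have hεhi0 : (0:ℝ) < εhi := hεlo.trans hεhi
  have hρ0 : 0 ≤ ρ := by
    rw [hρ]
    have : εlo / εhi ≤ 1 := (div_le_one hεhi0).mpr hεhi.le
    linarith
  haveI := hφ 0
  have hX : Nonempty X := nonempty_of_prob (φ 0)
  have main : ∀ k : ℕ, Measurable (Tseq q φ s h k) ∧ (∀ x, |Tseq q φ s h k x| ≤ C) ∧
      osc (Tseq q φ s h k) ≤ ρ ^ k * osc h := by
    intro k
    induction k with
    | zero =>
        refine ⟨hh, hhb, ?_⟩
        simp [Tseq]
    | succ k ih =>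
        obtain ⟨hmeas, hbound, hosc⟩ := ih
        haveI := hφ (s + k)
        have hT : Tseq q φ s h (k + 1) = fun y =>
            (∫ x, Tseq q φ s h k x * q x (y) ∂(φ (s + k))) / ∫ x, q x y ∂(φ (s + k)) := rfl
        refine ⟨?_, ?_, ?_⟩
        · rw [hT]
          exact key_meas q hq (φ (s + k)) _ hmeas
        · intro x
          rw [hT]
          exact key_bound q hq εlo εhi hεlo hεhi hqb (φ (s + k)) _ hmeas C hbound x
        · have step : osc (Tseq q φ s h (k + 1)) ≤ (1 - εlo / εhi) * osc (Tseq q φ s h k) := by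
            rw [osc]
            refine ciSup_le fun p => ?_
            rw [hT]
            exact key_contraction q hq εlo εhi hεlo hεhi hqb (φ (s + k)) _ hmeas C hbound p.1 p.2
          calc osc (Tseq q φ s h (k + 1)) ≤ ρ * osc (Tseq q φ s h k) := by rw [hρ]; exact step
            _ ≤ ρ * (ρ ^ k * osc h) := mul_le_mul_of_nonneg_left hosc hρ0
            _ = ρ ^ (k + 1) * osc h := by ring
  exact (main (t - s)).2.2
end

section
/- Under the strong-mixing framework, let φ be a probability measure on X, let T : X → ℝ be bounded measurable, and define T'(y) := ∫ T(x) B_φ(y, dx). Then for every y ∈ X, |T'(y) − φ(T)| ≤ (ε̄/ε̲) · (φ((T − φ(T))²))^{1/2}, and consequently osc(T') ≤ 2 (ε̄/ε̲) · (φ((T − φ(T))²))^{1/2}. (This quantifies the claim that once T is close to constant on the support of the filter, its one-step backward update is close to constant everywhere, justifying the variance stopping criterion.) -/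
open MeasureTheory

/-- bounded measurable functions are integrable w.r.t. a probability measure -/
lemma integrable_of_bdd {X : Type*} [MeasurableSpace X]
    (μ : Measure X) [IsProbabilityMeasure μ] (g : X → ℝ)
    (hg : Measurable g) (D : ℝ) (hgb : ∀ x, |g x| ≤ D) :
    Integrable g μ :=
  (integrable_const D).mono' hg.aestronglyMeasurable (ae_of_all _ hgb)

/-- Cauchy–Schwarz-type inequality on a probability measure:
`∫ |g| ≤ √(∫ g²)` for bounded measurable `g`. -/
lemma abs_integral_le_sqrt_sq {X : Type*} [MeasurableSpace X]
    (μ : Measure X) [IsProbabilityMeasure μ] (g : X → ℝ)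
    (hg : Measurable g) (D : ℝ) (hgb : ∀ x, |g x| ≤ D) :
    ∫ x, |g x| ∂μ ≤ Real.sqrt (∫ x, (g x) ^ 2 ∂μ) := by
  set m := ∫ x, |g x| ∂μ with hm
  have hgi : Integrable (fun x => |g x|) μ :=
    integrable_of_bdd μ _ hg.abs D (fun x => by simpa using hgb x)
  have hg2i : Integrable (fun x => (g x) ^ 2) μ := by
    refine integrable_of_bdd μ _ (hg.pow_const 2) (D ^ 2) (fun x => ?_)
    rw [abs_pow, ← sq_abs]
    exact pow_le_pow_left₀ (abs_nonneg _) (by simpa using hgb x) 2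
  have hmnn : 0 ≤ m := integral_nonneg (fun x => abs_nonneg _)
  have key : m ^ 2 ≤ ∫ x, (g x) ^ 2 ∂μ := by
    have h0 : 0 ≤ ∫ x, (|g x| - m) ^ 2 ∂μ := integral_nonneg (fun x => sq_nonneg _)
    have heq : ∀ x, (|g x| - m) ^ 2 = ((g x) ^ 2 - (2 * m) * |g x|) + m ^ 2 := by
      intro x; rw [← sq_abs (g x)]; ring
    have : (∫ x, (|g x| - m) ^ 2 ∂μ) = (∫ x, (g x) ^ 2 ∂μ) - m ^ 2 := by
      simp only [heq]
      have h1 : Integrable (fun x => g x ^ 2 - 2 * m * |g x|) μ :=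
        hg2i.sub (hgi.const_mul (2 * m))
      rw [integral_add h1 (integrable_const _),
        integral_sub hg2i (hgi.const_mul (2 * m)), integral_const_mul, integral_const]
      simp [← hm]; ring
    linarith [this ▸ h0]
  calc m = Real.sqrt (m ^ 2) := by rw [Real.sqrt_sq hmnn]
    _ ≤ Real.sqrt (∫ x, (g x) ^ 2 ∂μ) := Real.sqrt_le_sqrt key

/-- one-step backward update and the variance stopping criterion.
With `T'(y) = ∫ T(x) B_φ(y, dx) = (∫ T(x) q(x,y) φ(dx)) / (∫ q(x,y) φ(dx))`, one has
`|T'(y) − φ(T)| ≤ (ε̄/ε̲) √(φ((T − φ(T))²))` for every `y`, and consequently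
`osc(T') ≤ 2 (ε̄/ε̲) √(φ((T − φ(T))²))`. -/
theorem stmt12 {X : Type*} [MeasurableSpace X]
    (q : X → X → ℝ) (hq : Measurable (Function.uncurry q))
    (εlo εhi : ℝ) (hεlo : 0 < εlo) (hεhi : εlo ≤ εhi)
    (hqb : ∀ x x', q x x' ∈ Set.Icc εlo εhi)
    (φ : Measure X) [IsProbabilityMeasure φ]
    (T : X → ℝ) (hT : Measurable T) (C : ℝ) (hTb : ∀ x, |T x| ≤ C)
    (T' : X → ℝ)
    (hT' : T' = fun y => (∫ x, T x * q x y ∂φ) / ∫ x, q x y ∂φ) :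
    (∀ y : X, |T' y - ∫ x, T x ∂φ| ≤
        (εhi / εlo) * Real.sqrt (∫ x, (T x - ∫ x', T x' ∂φ) ^ 2 ∂φ)) ∧
      osc T' ≤ 2 * (εhi / εlo) * Real.sqrt (∫ x, (T x - ∫ x', T x' ∂φ) ^ 2 ∂φ) := by
  set m := ∫ x, T x ∂φ with hm
  set V := Real.sqrt (∫ x, (T x - m) ^ 2 ∂φ) with hV
  have hTb' : ∀ x, |T x| ≤ |C| := fun x => (hTb x).trans (le_abs_self C)
  have hC : (0:ℝ) ≤ |C| := abs_nonneg _
  have hVnn : 0 ≤ V := Real.sqrt_nonneg _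
  have hfrac : 0 ≤ εhi / εlo := div_nonneg (le_trans hεlo.le hεhi) hεlo.le
  -- measurability of q-slices
  have hqy : ∀ y, Measurable (fun x => q x y) := fun y =>
    hq.comp (measurable_id.prodMk measurable_const)
  have hqyi : ∀ y, Integrable (fun x => q x y) φ := fun y =>
    integrable_of_bdd φ _ (hqy y) εhi (fun x => by
      have := hqb x y
      rw [abs_of_nonneg (le_trans hεlo.le this.1)]; exact this.2)
  -- T bounded pointwise: |T x - m| ≤ ... ; integrability facts
  have hTi : Integrable T φ := integrable_of_bdd φ T hT |C| hTb'
  have hmb : |m| ≤ |C| := by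
    calc |m| ≤ ∫ x, |T x| ∂φ := by
          simpa using norm_integral_le_integral_norm (μ := φ) T
      _ ≤ ∫ _x, |C| ∂φ := integral_mono (hTi.abs) (integrable_const _) (fun x => hTb' x)
      _ = |C| := by simp
  have hTmb : ∀ x, |T x - m| ≤ 2 * |C| := fun x => by
    calc |T x - m| ≤ |T x| + |m| := abs_sub _ _
      _ ≤ |C| + |C| := add_le_add (hTb' x) hmb
      _ = 2 * |C| := by ring
  have hTm : Measurable (fun x => T x - m) := hT.sub measurable_const
  have hTmi : Integrable (fun x => T x - m) φ := hTi.sub (integrable_const _)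
  have main : ∀ y, |T' y - m| ≤ (εhi / εlo) * V := by
    intro y
    have hden_lb : εlo ≤ ∫ x, q x y ∂φ := by
      calc εlo = ∫ _x, εlo ∂φ := by simp
        _ ≤ ∫ x, q x y ∂φ := integral_mono (integrable_const _) (hqyi y)
            (fun x => (hqb x y).1)
    have hden_pos : 0 < ∫ x, q x y ∂φ := lt_of_lt_of_le hεlo hden_lb
    have hTqi : Integrable (fun x => T x * q x y) φ :=
      integrable_of_bdd φ _ (hT.mul (hqy y)) (|C| * εhi) (fun x => by
        rw [abs_mul]
        exact mul_le_mul (hTb' x) (by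
          have := hqb x y
          rw [abs_of_nonneg (le_trans hεlo.le this.1)]; exact this.2)
          (abs_nonneg _) hC)
    have hTmqi : Integrable (fun x => (T x - m) * q x y) φ := by
      have : (fun x => (T x - m) * q x y) = fun x => T x * q x y - m * q x y := by
        funext x; ring
      rw [this]
      exact hTqi.sub ((hqyi y).const_mul m)
    have hnum : T' y - m = (∫ x, (T x - m) * q x y ∂φ) / ∫ x, q x y ∂φ := by
      rw [hT']
      field_simp
      rw [show (fun x => (T x - m) * q x y) = fun x => T x * q x y - m * q x y from
        funext fun x => by ring, integral_sub hTqi ((hqyi y).const_mul m),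
        integral_const_mul]
      ring
    have hnum_bd : |∫ x, (T x - m) * q x y ∂φ| ≤ εhi * V := by
      have habsint : Integrable (fun x => |T x - m| * |q x y|) φ :=
        hTmqi.abs.congr (ae_of_all _ fun x => abs_mul _ _)
      calc |∫ x, (T x - m) * q x y ∂φ| ≤ ∫ x, |T x - m| * |q x y| ∂φ := by
            simpa [abs_mul] using
              norm_integral_le_integral_norm (μ := φ) (fun x => (T x - m) * q x y)
        _ ≤ ∫ x, εhi * |T x - m| ∂φ := by
            refine integral_mono habsint ((hTmi.abs).const_mul εhi) (fun x => ?_)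
            rw [mul_comm]
            refine mul_le_mul_of_nonneg_right ?_ (abs_nonneg _)
            have := hqb x y
            rw [abs_of_nonneg (le_trans hεlo.le this.1)]; exact this.2
        _ = εhi * ∫ x, |T x - m| ∂φ := integral_const_mul _ _
        _ ≤ εhi * V := by
            refine mul_le_mul_of_nonneg_left ?_ (le_trans hεlo.le hεhi)
            exact abs_integral_le_sqrt_sq φ _ hTm (2 * |C|) hTmb
    rw [hnum, abs_div, abs_of_pos hden_pos]
    rw [div_le_iff₀ hden_pos]
    calc |∫ x, (T x - m) * q x y ∂φ| ≤ εhi * V := hnum_bd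
      _ = (εhi / εlo) * V * εlo := by field_simp
      _ ≤ (εhi / εlo) * V * ∫ x, q x y ∂φ :=
          mul_le_mul_of_nonneg_left hden_lb (mul_nonneg hfrac hVnn)
  refine ⟨main, ?_⟩
  rcases isEmpty_or_nonempty X with hX | hX
  · have : osc T' = 0 := by
      rw [osc, iSup_of_empty']
      exact Real.sSup_empty
    rw [this]
    positivity
  · rw [osc]
    refine ciSup_le (fun p => ?_)
    calc |T' p.1 - T' p.2| = |(T' p.1 - m) - (T' p.2 - m)| := by ring_nf
      _ ≤ |T' p.1 - m| + |T' p.2 - m| := abs_sub _ _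
      _ ≤ (εhi / εlo) * V + (εhi / εlo) * V := add_le_add (main p.1) (main p.2)
      _ = 2 * (εhi / εlo) * V := by ring
end
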